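/- arXiv:1907.09277 — 10 statements merged into one kernel-verified Lean document; each statement's English description precedes it below -/
import Mathlib

section
/- Let U = Σᵢ Uᵢ ⊗ |eᵢ⟩⟨fᵢ| and V = Σᵢ Uᵢ ⊗ |fᵢ⟩⟨fᵢ| with Uᵢ unitary on H and (eᵢ), (fᵢ) orthonormal bases of K. Then for every state ω on K and every density matrix ρ on H, Tr_K(U(ρ⊗ω)U*) = Tr_K(V(ρ⊗ω)V*). -/
open Matrix
open scoped Kronecker ComplexOrder

lemma reorder3 {k : ℕ} (g : Fin k → Fin k → Fin k → ℂ) :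
    (∑ a, ∑ b, ∑ c, g a b c) = ∑ a, ∑ b, ∑ c, g c a b := by
  rw [Finset.sum_comm]
  exact Finset.sum_congr rfl fun _ _ => Finset.sum_comm

lemma kron_conjT {n k : ℕ} (A : Matrix (Fin n) (Fin n) ℂ) (B : Matrix (Fin k) (Fin k) ℂ) :
    (A ⊗ₖ B)ᴴ = Aᴴ ⊗ₖ Bᴴ := by
  ext ⟨a, b⟩ ⟨c, d⟩
  simp [conjTranspose_apply, kroneckerMap_apply, mul_comm]

lemma traceB {k : ℕ} (e f : Fin k → (Fin k → ℂ)) (ω : Matrix (Fin k) (Fin k) ℂ) (i i' : Fin k) :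
    ∑ j, ((Matrix.of fun x y => e i x * star (f i y)) * ω *
        (Matrix.of fun x y => e i' x * star (f i' y))ᴴ) j j
      = (star (e i') ⬝ᵥ e i) * (star (f i) ⬝ᵥ ω *ᵥ f i') := by
  simp only [mul_apply, conjTranspose_apply, of_apply, dotProduct, mulVec, Pi.star_apply,
    star_mul', star_star, Finset.sum_mul, Finset.mul_sum]
  conv_lhs => rw [reorder3, reorder3]
  apply Finset.sum_congr rfl; intro j _
  rw [Finset.sum_comm]
  apply Finset.sum_congr rfl; intro x _
  apply Finset.sum_congr rfl; intro y _
  ring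

lemma key {n k : ℕ} (A : Fin k → Matrix (Fin n) (Fin n) ℂ)
    (e f : Fin k → (Fin k → ℂ))
    (he : ∀ i j, star (e i) ⬝ᵥ e j = if i = j then 1 else 0)
    (ρ : Matrix (Fin n) (Fin n) ℂ) (ω : Matrix (Fin k) (Fin k) ℂ) (a b : Fin n) :
    ∑ j, ((∑ i, (A i) ⊗ₖ (Matrix.of fun x y => e i x * star (f i y))) * (ρ ⊗ₖ ω) *
        (∑ i, (A i) ⊗ₖ (Matrix.of fun x y => e i x * star (f i y)))ᴴ) (a, j) (b, j)
      = ∑ i, (A i * ρ * (A i)ᴴ) a b * (star (f i) ⬝ᵥ ω *ᵥ f i) := by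
  have hW : (∑ i, (A i) ⊗ₖ (Matrix.of fun x y => e i x * star (f i y))) * (ρ ⊗ₖ ω) *
        (∑ i, (A i) ⊗ₖ (Matrix.of fun x y => e i x * star (f i y)))ᴴ
      = ∑ i, ∑ i', (A i * ρ * (A i')ᴴ) ⊗ₖ
          ((Matrix.of fun x y => e i x * star (f i y)) * ω *
            (Matrix.of fun x y => e i' x * star (f i' y))ᴴ) := by
    simp only [Matrix.conjTranspose_sum, Finset.sum_mul, Finset.mul_sum]
    rw [Finset.sum_comm]
    apply Finset.sum_congr rfl; intro i _
    apply Finset.sum_congr rfl; intro i' _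
    rw [kron_conjT, mul_kronecker_mul, mul_kronecker_mul]
  rw [hW]
  simp only [Matrix.sum_apply, kroneckerMap_apply]
  rw [Finset.sum_comm]
  apply Finset.sum_congr rfl; intro i _
  rw [Finset.sum_comm]
  calc ∑ i', ∑ j, (A i * ρ * (A i')ᴴ) a b *
          ((Matrix.of fun x y => e i x * star (f i y)) * ω *
            (Matrix.of fun x y => e i' x * star (f i' y))ᴴ) j j
      = ∑ i', (A i * ρ * (A i')ᴴ) a b *
          ((if i' = i then (1 : ℂ) else 0) * (star (f i) ⬝ᵥ ω *ᵥ f i')) := by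
        apply Finset.sum_congr rfl; intro i' _
        rw [← Finset.mul_sum, traceB, he i' i]
    _ = (A i * ρ * (A i)ᴴ) a b * (star (f i) ⬝ᵥ ω *ᵥ f i) := by
        simp [ite_mul, mul_ite, Finset.sum_ite_eq]


/-- `U = ∑ i, Uᵢ ⊗ |eᵢ⟩⟨fᵢ|` and `V = ∑ i, Uᵢ ⊗ |fᵢ⟩⟨fᵢ|` have
the same classical action on `H`: for every density matrix `ω` on `K` and
every density matrix `ρ` on `H`, `Tr_K(U(ρ⊗ω)U*) = Tr_K(V(ρ⊗ω)V*)`. -/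
theorem stmt7 {n k : ℕ} (A : Fin k → Matrix (Fin n) (Fin n) ℂ)
    (hA : ∀ i, A i ∈ Matrix.unitaryGroup (Fin n) ℂ)
    (e f : Fin k → (Fin k → ℂ))
    (he : ∀ i j, star (e i) ⬝ᵥ e j = if i = j then 1 else 0)
    (hf : ∀ i j, star (f i) ⬝ᵥ f j = if i = j then 1 else 0)
    (U V : Matrix (Fin n × Fin k) (Fin n × Fin k) ℂ)
    (hU : U = ∑ i, (A i) ⊗ₖ (Matrix.of fun x y => e i x * star (f i y)))
    (hV : V = ∑ i, (A i) ⊗ₖ (Matrix.of fun x y => f i x * star (f i y))) :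
    ∀ (ρ : Matrix (Fin n) (Fin n) ℂ), ρ.PosSemidef → ρ.trace = 1 →
    ∀ (ω : Matrix (Fin k) (Fin k) ℂ), ω.PosSemidef → ω.trace = 1 →
    Matrix.of (fun a b => ∑ j, (U * (ρ ⊗ₖ ω) * Uᴴ) (a, j) (b, j)) =
      Matrix.of (fun a b => ∑ j, (V * (ρ ⊗ₖ ω) * Vᴴ) (a, j) (b, j)) := by
  intro ρ _ _ ω _ _
  subst hU hV
  ext a b
  simp only [Matrix.of_apply]
  rw [key A e f he ρ ω a b, key A f f hf ρ ω a b]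
end

section
/- Let v₁,…,v_{N+1} be an obtuse system in ℂ^N, i.e. ⟨vᵢ, vⱼ⟩ = −1 for all i ≠ j, and set pᵢ = 1/(1 + ‖vᵢ‖²). Then Σᵢ pᵢ = 1. -/
/-!
Since `N + 1` vectors in `ℂ^N` are linearly dependent, there is a nontrivial relation
`∑ gᵢ vᵢ = 0`. Pairing it with `vⱼ` and using `⟨vⱼ, vᵢ⟩ = -1` for `i ≠ j` gives
`gⱼ (1 + ‖vⱼ‖²) = ∑ᵢ gᵢ` for every `j`. The common value `S = ∑ᵢ gᵢ` is nonzero, and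
summing `gⱼ / S = 1 / (1 + ‖vⱼ‖²)` over `j` gives the claim.
-/

open Finset

section Field

variable {K ι : Type*} [Field K] [Fintype ι]

theorem sum_inv_eq_one_of_mul_eq_sum {g a : ι → K} (ha : ∀ j, a j ≠ 0) (hg : g ≠ 0)
    (h : ∀ j, g j * a j = ∑ i, g i) : ∑ j, (a j)⁻¹ = 1 := by
  obtain ⟨i₀, hi₀⟩ := Function.ne_iff.mp hg
  have hS : ∑ i, g i ≠ 0 := by
    rw [← h i₀]
    exact mul_ne_zero hi₀ (ha i₀)
  have hinv : ∀ j, (a j)⁻¹ = g j / ∑ i, g i := fun j => by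
    rw [← h j, div_mul_cancel_left₀ (left_ne_zero_of_mul (h j ▸ hS))]
  simp_rw [hinv, ← Finset.sum_div, div_self hS]

end Field

section InnerProductSpace

variable {𝕜 E ι : Type*} [RCLike 𝕜] [NormedAddCommGroup E] [InnerProductSpace 𝕜 E]
  [Fintype ι]

/-- The paper's obtuse systems are the families with `IsObtuseSystem 𝕜 v` and `N + 1` members
in an `N`-dimensional space. -/
def IsObtuseSystem (𝕜 : Type*) [RCLike 𝕜] [InnerProductSpace 𝕜 E] (v : ι → E) : Prop :=
  Pairwise fun i j => inner 𝕜 (v i) (v j) = -1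

theorem IsObtuseSystem.coeff_mul_one_add_norm_sq {v : ι → E} (hv : IsObtuseSystem 𝕜 v)
    {g : ι → 𝕜} (hg : ∑ i, g i • v i = 0) (j : ι) :
    g j * ((1 + ‖v j‖ ^ 2 : ℝ) : 𝕜) = ∑ i, g i := by
  classical
  have hpair : ∑ i, g i * inner 𝕜 (v j) (v i) = 0 := by
    simpa only [inner_sum, inner_smul_right, inner_zero_right] using congrArg (inner 𝕜 (v j)) hg
  rw [← Finset.add_sum_erase _ _ (mem_univ j), inner_self_eq_norm_sq_to_K,
    Finset.sum_congr rfl fun i hi => by rw [hv (Finset.ne_of_mem_erase hi).symm]] at hpair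
  rw [← Finset.add_sum_erase _ _ (mem_univ j)]
  push_cast
  simp only [mul_neg, mul_one, Finset.sum_neg_distrib] at hpair
  linear_combination hpair

theorem IsObtuseSystem.sum_one_div_one_add_norm_sq {v : ι → E} (hv : IsObtuseSystem 𝕜 v)
    (hdep : ¬ LinearIndependent 𝕜 v) : ∑ i, (1 / (1 + ‖v i‖ ^ 2) : ℝ) = 1 := by
  obtain ⟨g, hg, i₀, hi₀⟩ := Fintype.not_linearIndependent_iff.mp hdep
  have hpos : ∀ j, (0 : ℝ) < 1 + ‖v j‖ ^ 2 := fun j => by positivity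
  have h𝕜 : ∑ j, (((1 + ‖v j‖ ^ 2 : ℝ) : 𝕜))⁻¹ = 1 :=
    sum_inv_eq_one_of_mul_eq_sum (fun j => RCLike.ofReal_ne_zero.mpr (hpos j).ne')
      (Function.ne_iff.mpr ⟨i₀, hi₀⟩) (hv.coeff_mul_one_add_norm_sq hg)
  apply RCLike.ofReal_injective (K := 𝕜)
  push_cast [one_div] at h𝕜 ⊢
  exact h𝕜

end InnerProductSpace

/-- for an obtuse system `v₁,…,v_{N+1}` in `ℂ^N`, the associated
probabilities `pᵢ = 1/(1+‖vᵢ‖²)` sum to 1. -/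
theorem stmt8 {N : ℕ} (v : Fin (N + 1) → EuclideanSpace ℂ (Fin N))
    (hv : ∀ i j, i ≠ j → (inner ℂ (v i) (v j) : ℂ) = -1) :
    ∑ i, (1 / (1 + ‖v i‖ ^ 2) : ℝ) = 1 := by
  have hdep : ¬ LinearIndependent ℂ v := fun h => by
    simpa [finrank_euclideanSpace_fin] using h.fintype_card_le_finrank
  exact IsObtuseSystem.sum_one_div_one_add_norm_sq hv hdep
end

section
/- Let v₁,…,v_{N+1} be an obtuse system in ℂ^N with pᵢ = 1/(1 + ‖vᵢ‖²). Then Σᵢ pᵢ vᵢ = 0. -/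
/-!
Since `N + 1` vectors in `ℂ^N` are linearly dependent, there is a nontrivial relation
`∑ gᵢ vᵢ = 0`. Pairing it with `vⱼ` and using `⟪vⱼ, vᵢ⟫ = -1` for `i ≠ j` gives
`gⱼ (1 + ‖vⱼ‖²) = ∑ᵢ gᵢ` for every `j`. Hence the relation is a nonzero multiple of `(pᵢ)`.
-/

open Finset

section ObtuseFamily

variable {𝕜 E ι : Type*} [RCLike 𝕜] [NormedAddCommGroup E] [InnerProductSpace 𝕜 E]
  [Fintype ι] {v : ι → E}

theorem mul_one_add_norm_sq_eq_sum_of_sum_smul_eq_zero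
    (hv : Pairwise fun i j => inner 𝕜 (v i) (v j) = -1) {g : ι → 𝕜}
    (hg : ∑ i, g i • v i = 0) (j : ι) :
    g j * ((1 + ‖v j‖ ^ 2 : ℝ) : 𝕜) = ∑ i, g i := by
  classical
  have hinner : ∀ i, inner 𝕜 (v j) (v i) =
      (if i = j then ((1 + ‖v j‖ ^ 2 : ℝ) : 𝕜) else 0) - 1 := by
    intro i
    split_ifs with h
    · subst h
      push_cast
      rw [inner_self_eq_norm_sq_to_K]
      ring
    · rw [hv (Ne.symm h)]
      ring
  have hpair := congrArg (inner 𝕜 (v j)) hg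
  simp only [inner_sum, inner_smul_right, inner_zero_right, hinner, mul_sub, mul_ite,
    mul_zero, mul_one, sum_sub_distrib, sum_ite_eq', mem_univ, if_true] at hpair
  linear_combination hpair

theorem sum_inv_one_add_norm_sq_smul_eq_zero
    (hv : Pairwise fun i j => inner 𝕜 (v i) (v j) = -1) (hdep : ¬ LinearIndependent 𝕜 v) :
    ∑ i, (((1 + ‖v i‖ ^ 2)⁻¹ : ℝ) : 𝕜) • v i = 0 := by
  obtain ⟨g, hg, i₀, hi₀⟩ := Fintype.not_linearIndependent_iff.mp hdep
  have key := mul_one_add_norm_sq_eq_sum_of_sum_smul_eq_zero hv hg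
  have hpos : ∀ i, ((1 + ‖v i‖ ^ 2 : ℝ) : 𝕜) ≠ 0 := fun i =>
    RCLike.ofReal_ne_zero.mpr (by positivity)
  have hC : ∑ i, g i ≠ 0 := by
    rw [← key i₀]
    exact mul_ne_zero hi₀ (hpos i₀)
  have hweight : ∀ i, (((1 + ‖v i‖ ^ 2)⁻¹ : ℝ) : 𝕜) = (∑ i, g i)⁻¹ * g i := by
    intro i
    have hgi : g i ≠ 0 := left_ne_zero_of_mul (key i ▸ hC)
    rw [← key i, RCLike.ofReal_inv]
    field_simp [hpos i, hgi]
  calc ∑ i, (((1 + ‖v i‖ ^ 2)⁻¹ : ℝ) : 𝕜) • v i = (∑ i, g i)⁻¹ • ∑ i, g i • v i := by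
        simp_rw [hweight, smul_sum, smul_smul]
    _ = 0 := by rw [hg, smul_zero]

end ObtuseFamily

/-- for an obtuse system `v₁,…,v_{N+1}` in `ℂ^N` with
`pᵢ = 1/(1+‖vᵢ‖²)`, one has `∑ i, pᵢ vᵢ = 0`. -/
theorem stmt9 {N : ℕ} (v : Fin (N + 1) → EuclideanSpace ℂ (Fin N))
    (hv : ∀ i j, i ≠ j → (inner ℂ (v i) (v j) : ℂ) = -1) :
    ∑ i, (1 / (1 + ‖v i‖ ^ 2) : ℝ) • v i = 0 := by
  have hdep : ¬ LinearIndependent ℂ v := fun h => by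
    simpa [finrank_euclideanSpace] using h.fintype_card_le_finrank
  simp_rw [one_div, RCLike.real_smul_eq_coe_smul (K := ℂ)]
  exact sum_inv_one_add_norm_sq_smul_eq_zero (fun i j => hv i j) hdep
end

section
/- Let v₁,…,v_{N+1} be an obtuse system in ℂ^N with pᵢ = 1/(1 + ‖vᵢ‖²). Then Σᵢ pᵢ |vᵢ⟩⟨vᵢ| = I on ℂ^N. -/
/-!
Lifting each `vᵢ` to `uᵢ = (vᵢ, 1) ∈ ℂ^{N+1}` turns the obtuse system into an orthogonal family:
`⟪uᵢ, uⱼ⟫ = ⟪vᵢ, vⱼ⟫ + 1 = 0`, and `‖uᵢ‖² = 1 + ‖vᵢ‖²`. These are `N + 1` nonzero orthogonal vectors,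
hence an orthogonal basis of `ℂ^{N+1}`, so `∑ᵢ |uᵢ⟩⟨uᵢ| / ‖uᵢ‖² = I`. Applying this to `(x, 0)` and
dropping the last coordinate gives the claim.
-/

open scoped InnerProductSpace ComplexConjugate
open Module

section OrthogonalFamily

variable {𝕜 F ι : Type*} [RCLike 𝕜] [NormedAddCommGroup F] [InnerProductSpace 𝕜 F]
  [FiniteDimensional 𝕜 F] [Fintype ι]

theorem sum_inv_norm_sq_smul_rankOne_eq_id {u : ι → F} (hu : ∀ i, u i ≠ 0)
    (ho : Pairwise fun i j => ⟪u i, u j⟫_𝕜 = 0) (hcard : Fintype.card ι = finrank 𝕜 F) :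
    ∑ i, (((‖u i‖ ^ 2)⁻¹ : ℝ) : 𝕜) • (innerSL 𝕜 (u i)).smulRight (u i) =
      ContinuousLinearMap.id 𝕜 F := by
  let b := basisOfLinearIndependentOfCardEqFinrank' u
    (linearIndependent_of_ne_zero_of_inner_eq_zero hu ho) hcard
  refine ContinuousLinearMap.coe_injective (b.ext fun j => ?_)
  have hj : (((‖u j‖ ^ 2)⁻¹ : ℝ) : 𝕜) * ⟪u j, u j⟫_𝕜 = 1 := by
    rw [inner_self_eq_norm_sq_to_K]
    push_cast
    exact inv_mul_cancel₀ (by simpa using hu j)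
  simp only [b, coe_basisOfLinearIndependentOfCardEqFinrank', ContinuousLinearMap.coe_coe,
    sum_apply, smul_apply, ContinuousLinearMap.smulRight_apply, innerSL_apply_apply, ContinuousLinearMap.id_apply]
  rw [Finset.sum_eq_single j (fun i _ hij => by simp [ho hij]) (by simp), smul_smul, hj, one_smul]

end OrthogonalFamily

namespace EuclideanSpace

variable {𝕜 : Type*} [RCLike 𝕜] {n : ℕ}

def snoc (x : EuclideanSpace 𝕜 (Fin n)) (a : 𝕜) : EuclideanSpace 𝕜 (Fin (n + 1)) :=
  WithLp.toLp 2 (Fin.snoc x a)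

variable (𝕜 n) in
def init : EuclideanSpace 𝕜 (Fin (n + 1)) →ₗ[𝕜] EuclideanSpace 𝕜 (Fin n) where
  toFun y := WithLp.toLp 2 (Fin.init y)
  map_add' _ _ := rfl
  map_smul' _ _ := rfl

@[simp]
theorem init_snoc (x : EuclideanSpace 𝕜 (Fin n)) (a : 𝕜) : init 𝕜 n (snoc x a) = x :=
  congrArg (WithLp.toLp 2) (Fin.init_snoc (α := fun _ => 𝕜) a x.ofLp)

theorem inner_snoc_snoc (x y : EuclideanSpace 𝕜 (Fin n)) (a b : 𝕜) :
    ⟪snoc x a, snoc y b⟫_𝕜 = ⟪x, y⟫_𝕜 + conj a * b := by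
  simp [snoc, PiLp.inner_apply, Fin.sum_univ_castSucc, mul_comm]

theorem norm_snoc_sq (x : EuclideanSpace 𝕜 (Fin n)) (a : 𝕜) :
    ‖snoc x a‖ ^ 2 = ‖x‖ ^ 2 + ‖a‖ ^ 2 := by
  simp [snoc, norm_sq_eq, Fin.sum_univ_castSucc]

end EuclideanSpace

open EuclideanSpace in
theorem sum_rankOne_obtuse_eq_id {𝕜 : Type*} [RCLike 𝕜] {N : ℕ}
    {v : Fin (N + 1) → EuclideanSpace 𝕜 (Fin N)} (hv : Pairwise fun i j => ⟪v i, v j⟫_𝕜 = -1) :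
    ∑ i, ((1 / (1 + ‖v i‖ ^ 2) : ℝ) : 𝕜) • (innerSL 𝕜 (v i)).smulRight (v i) =
      ContinuousLinearMap.id 𝕜 (EuclideanSpace 𝕜 (Fin N)) := by
  set u := fun i => snoc (v i) 1
  have horth : Pairwise fun i j => ⟪u i, u j⟫_𝕜 = 0 := fun i j hij => by
    simp [u, inner_snoc_snoc, hv hij]
  have hnorm : ∀ i, ‖u i‖ ^ 2 = 1 + ‖v i‖ ^ 2 := fun i => by
    simp [u, norm_snoc_sq, add_comm]
  have hu : ∀ i, u i ≠ 0 := fun i h => by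
    have := hnorm i
    rw [h, norm_zero] at this
    nlinarith [sq_nonneg ‖v i‖]
  have hid := sum_inv_norm_sq_smul_rankOne_eq_id hu horth (by simp)
  ext1 x
  have hx := congrArg (init 𝕜 N) (congrArg (· (snoc x 0)) hid)
  simpa [u, hnorm, inner_snoc_snoc] using hx

/-- for an obtuse system `v₁,…,v_{N+1}` in `ℂ^N` with
`pᵢ = 1/(1+‖vᵢ‖²)`, one has `∑ i, pᵢ |vᵢ⟩⟨vᵢ| = I`, where `|v⟩⟨v|` is the
rank-one operator `x ↦ ⟨v, x⟩ v`. -/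
theorem stmt10 {N : ℕ} (v : Fin (N + 1) → EuclideanSpace ℂ (Fin N))
    (hv : ∀ i j, i ≠ j → (inner ℂ (v i) (v j) : ℂ) = -1) :
    ∑ i, ((1 / (1 + ‖v i‖ ^ 2) : ℝ) : ℂ) • ((innerSL ℂ (v i)).smulRight (v i)) =
      ContinuousLinearMap.id ℂ (EuclideanSpace ℂ (Fin N)) :=
  sum_rankOne_obtuse_eq_id hv
end

section
/- Let {v₁,…,v_{N+1}} be an obtuse system in ℂ^N with associated probabilities pᵢ = 1/(1+‖vᵢ‖²), and let {w₁,…,w_{N+1}} be a family of vectors in ℂ^N. Then {wᵢ} is an obtuse system with the same associated probabilities pᵢ if and only if there exists a unitary operator U on ℂ^N with wᵢ = U vᵢ for all i. -/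
/-!
Equal probabilities mean equal norms, so together with the obtuse condition the two families have
the same Gram matrix. A family with the Gram matrix of `v` is the image of `v` under a linear
isometry as soon as `v` spans, and an obtuse system spans: testing `∑ cᵢ vᵢ = 0` against `vⱼ`
gives `cⱼ (1 + ‖vⱼ‖²) = ∑ cᵢ`, so the relations among the `N + 1` vectors form a line.
-/

open Finset InnerProductSpace

variable {𝕜 E F ι : Type*} [RCLike 𝕜] [NormedAddCommGroup E] [InnerProductSpace 𝕜 E]
  [NormedAddCommGroup F] [InnerProductSpace 𝕜 F] [Fintype ι]

theorem one_add_ofReal_sq_ne_zero (r : ℝ) : (1 + (r : 𝕜) ^ 2) ≠ 0 := by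
  norm_cast
  positivity

theorem norm_sum_smul_eq_of_inner_eq {v : ι → E} {w : ι → F}
    (h : ∀ i j, ⟪w i, w j⟫_𝕜 = ⟪v i, v j⟫_𝕜) (c : ι → 𝕜) :
    ‖∑ i, c i • w i‖ = ‖∑ i, c i • v i‖ := by
  have : ⟪∑ i, c i • w i, ∑ i, c i • w i⟫_𝕜 = ⟪∑ i, c i • v i, ∑ i, c i • v i⟫_𝕜 := by
    simp only [sum_inner, inner_sum, inner_smul_left, inner_smul_right, h]
  rw [@norm_eq_sqrt_re_inner 𝕜, @norm_eq_sqrt_re_inner 𝕜, this]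

theorem exists_linearIsometry_of_inner_eq {v : ι → E} {w : ι → F}
    (hv : Submodule.span 𝕜 (Set.range v) = ⊤) (h : ∀ i j, ⟪w i, w j⟫_𝕜 = ⟪v i, v j⟫_𝕜) :
    ∃ U : E →ₗᵢ[𝕜] F, ∀ i, U (v i) = w i := by
  set Tv := Fintype.linearCombination 𝕜 v
  set Tw := Fintype.linearCombination 𝕜 w
  have hT : ∀ c, ‖Tw c‖ = ‖Tv c‖ := fun c => by
    simpa only [Tv, Tw, Fintype.linearCombination_apply] using norm_sum_smul_eq_of_inner_eq h c
  obtain ⟨s, hs⟩ := Tv.exists_rightInverse_of_surjective (by rwa [Fintype.range_linearCombination])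
  have hTvs : ∀ x, Tv (s x) = x := LinearMap.congr_fun hs
  -- `s (Tv c) - c` is killed by `Tv`, hence by `Tw`, since `‖Tw ·‖ = ‖Tv ·‖`.
  have hTws : ∀ c, Tw (s (Tv c)) = Tw c := fun c => by
    rw [← sub_eq_zero, ← map_sub, ← norm_eq_zero, hT, map_sub, hTvs, sub_self, norm_zero]
  refine ⟨⟨Tw ∘ₗ s, fun x => by simp only [LinearMap.comp_apply, hT, hTvs]⟩, fun i => ?_⟩
  classical
  have := hTws (Pi.single i 1)
  simp only [Tv, Tw, Fintype.linearCombination_apply_single, one_smul] at this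
  exact this

section Obtuse

variable {v : ι → E}

theorem mul_one_add_norm_sq_eq_sum_of_obtuse (hv : ∀ i j, i ≠ j → ⟪v i, v j⟫_𝕜 = -1)
    {c : ι → 𝕜} (hc : ∑ i, c i • v i = 0) (j : ι) :
    c j * (1 + (‖v j‖ : 𝕜) ^ 2) = ∑ i, c i := by
  classical
  have hgram : ∀ i, ⟪v j, v i⟫_𝕜 = (if i = j then 1 + (‖v j‖ : 𝕜) ^ 2 else 0) - 1 := by
    intro i
    split_ifs with hij
    · rw [hij, inner_self_eq_norm_sq_to_K]
      ring
    · rw [hv j i (Ne.symm hij)]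
      ring
  have h0 : ∑ i, c i * ⟪v j, v i⟫_𝕜 = 0 := by
    simpa only [inner_sum, inner_smul_right, inner_zero_right] using congrArg (⟪v j, ·⟫_𝕜) hc
  simp only [hgram, mul_sub, mul_ite, mul_zero, mul_one, sum_sub_distrib, sum_ite_eq', mem_univ,
    if_true] at h0
  linear_combination h0

theorem ker_linearCombination_le_span_of_obtuse (hv : ∀ i j, i ≠ j → ⟪v i, v j⟫_𝕜 = -1) :
    LinearMap.ker (Fintype.linearCombination 𝕜 v) ≤
      𝕜 ∙ fun j => (1 + (‖v j‖ : 𝕜) ^ 2)⁻¹ := by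
  intro c hc
  rw [LinearMap.mem_ker, Fintype.linearCombination_apply] at hc
  refine Submodule.mem_span_singleton.mpr ⟨∑ i, c i, funext fun j => ?_⟩
  rw [Pi.smul_apply, smul_eq_mul, ← div_eq_mul_inv, div_eq_iff (one_add_ofReal_sq_ne_zero _)]
  exact (mul_one_add_norm_sq_eq_sum_of_obtuse hv hc j).symm

theorem span_range_eq_top_of_obtuse [FiniteDimensional 𝕜 E]
    (hv : ∀ i j, i ≠ j → ⟪v i, v j⟫_𝕜 = -1) (hcard : Fintype.card ι = Module.finrank 𝕜 E + 1) :
    Submodule.span 𝕜 (Set.range v) = ⊤ := by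
  rw [← Fintype.range_linearCombination]
  apply Submodule.eq_top_of_finrank_eq
  have hker : Module.finrank 𝕜 (LinearMap.ker (Fintype.linearCombination 𝕜 v)) ≤ 1 :=
    (Submodule.finrank_mono (ker_linearCombination_le_span_of_obtuse hv)).trans
      ((finrank_span_le_card _).trans (by simp))
  have hrank := (Fintype.linearCombination 𝕜 v).finrank_range_add_finrank_ker
  have hle := Submodule.finrank_le (LinearMap.range (Fintype.linearCombination 𝕜 v))
  rw [Module.finrank_fintype_fun_eq_card] at hrank
  omega

end Obtuse

/-- a family `w` is an obtuse system with the same associated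
probabilities `pᵢ = 1/(1+‖vᵢ‖²)` as the obtuse system `v` if and only if
`wᵢ = U vᵢ` for some unitary `U` of `ℂ^N`. -/
theorem stmt12 {N : ℕ} (v w : Fin (N + 1) → EuclideanSpace ℂ (Fin N))
    (hv : ∀ i j, i ≠ j → (inner ℂ (v i) (v j) : ℂ) = -1) :
    ((∀ i j, i ≠ j → (inner ℂ (w i) (w j) : ℂ) = -1) ∧
      ∀ i, (1 / (1 + ‖w i‖ ^ 2) : ℝ) = 1 / (1 + ‖v i‖ ^ 2)) ↔
    ∃ U : EuclideanSpace ℂ (Fin N) ≃ₗᵢ[ℂ] EuclideanSpace ℂ (Fin N),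
      ∀ i, w i = U (v i) := by
  constructor
  · rintro ⟨hw, hp⟩
    have hnorm : ∀ i, ‖w i‖ ^ 2 = ‖v i‖ ^ 2 := fun i => by simpa using hp i
    have hgram : ∀ i j, ⟪w i, w j⟫_ℂ = ⟪v i, v j⟫_ℂ := by
      intro i j
      rcases eq_or_ne i j with rfl | hij
      · simp only [inner_self_eq_norm_sq_to_K]
        exact_mod_cast hnorm i
      · rw [hw i j hij, hv i j hij]
    obtain ⟨U, hU⟩ := exists_linearIsometry_of_inner_eq
      (span_range_eq_top_of_obtuse hv (by simp)) hgram
    exact ⟨U.toLinearIsometryEquiv rfl, fun i => (hU i).symm⟩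
  · rintro ⟨U, hU⟩
    exact ⟨fun i j hij => by rw [hU, hU, LinearIsometryEquiv.inner_map_map, hv i j hij],
      fun i => by rw [hU, U.norm_map]⟩
end

section
/- An obtuse random variable X in ℂ^N (taking values v₁,…,v_{N+1} of an obtuse system with probabilities pᵢ = 1/(1+‖vᵢ‖²)) is centered and normalized: E[X^i] = 0 and E[conj(X^i) X^j] = δᵢⱼ for all coordinates i, j = 1,…,N. -/
/-!
Appending a first coordinate `1` turns `v₁, …, v_{N+1}` into vectors `wᵢ = (1, vᵢ) ∈ ℂ^{N+1}`
with `⟪wᵢ, wⱼ⟫ = 1 + ⟪vᵢ, vⱼ⟫`: obtuseness says exactly that they are pairwise orthogonal, and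
`‖wᵢ‖² = 1/pᵢ`. So the `√pᵢ wᵢ` are `N + 1` orthonormal vectors in `ℂ^{N+1}`, i.e. the columns of a
unitary matrix, whose rows are then orthonormal too: `∑ᵢ pᵢ conj (wᵢ c) (wᵢ a) = δ_ac`.
The coordinate `c = 0` gives `E[X^k] = 0`, and coordinates `a, c ≥ 1` give `E[conj(X^k) X^l] = δ_kl`.
-/

open scoped InnerProductSpace ComplexConjugate

namespace EuclideanSpace

variable {𝕜 ι κ : Type*} [RCLike 𝕜] [Fintype ι] [Fintype κ] [DecidableEq κ]

theorem _root_.Orthonormal.sum_conj_mul_eq_ite {u : ι → EuclideanSpace 𝕜 κ}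
    (hu : Orthonormal 𝕜 u) (hcard : Fintype.card ι = Fintype.card κ) (a c : κ) :
    ∑ i, conj (u i c) * u i a = if a = c then 1 else 0 := by
  have : Nonempty ι := Fintype.card_pos_iff.mp (hcard ▸ Fintype.card_pos_iff.mpr ⟨a⟩)
  let b := (basisOfOrthonormalOfCardEqFinrank hu (by simp [hcard])).toOrthonormalBasis
    (by rwa [coe_basisOfOrthonormalOfCardEqFinrank])
  have hb : ⇑b = u := by simp [b]
  simpa [hb, inner_single_left, inner_single_right, PiLp.single_apply, mul_comm, eq_comm]
    using b.sum_inner_mul_inner (single a 1) (single c 1)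

theorem sum_inv_norm_sq_mul_conj_mul_eq_ite {w : ι → EuclideanSpace 𝕜 κ} (hw : ∀ i, w i ≠ 0)
    (horth : Pairwise fun i j => ⟪w i, w j⟫_𝕜 = 0) (hcard : Fintype.card ι = Fintype.card κ)
    (a c : κ) :
    ∑ i, (((‖w i‖ ^ 2)⁻¹ : ℝ) : 𝕜) * conj (w i c) * w i a = if a = c then 1 else 0 := by
  have hu : Orthonormal 𝕜 fun i => (‖w i‖⁻¹ : 𝕜) • w i := by
    refine ⟨fun i => norm_smul_inv_norm (hw i), fun i j hij => ?_⟩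
    simp [inner_smul_left, inner_smul_right, horth hij]
  rw [← hu.sum_conj_mul_eq_ite hcard a c]
  refine Finset.sum_congr rfl fun i _ => ?_
  simp only [PiLp.smul_apply, smul_eq_mul, map_mul, map_inv₀, RCLike.conj_ofReal,
    RCLike.ofReal_pow]
  ring

variable {n : ℕ}

def consOne (x : EuclideanSpace 𝕜 (Fin n)) : EuclideanSpace 𝕜 (Fin (n + 1)) :=
  WithLp.toLp 2 (Fin.cons 1 x)

@[simp] theorem consOne_zero (x : EuclideanSpace 𝕜 (Fin n)) : consOne x 0 = 1 := rfl

@[simp] theorem consOne_succ (x : EuclideanSpace 𝕜 (Fin n)) (k : Fin n) :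
    consOne x k.succ = x k := rfl

theorem consOne_ne_zero (x : EuclideanSpace 𝕜 (Fin n)) : consOne x ≠ 0 := fun h => by
  simpa using congr($h 0)

theorem inner_consOne (x y : EuclideanSpace 𝕜 (Fin n)) :
    ⟪consOne x, consOne y⟫_𝕜 = 1 + ⟪x, y⟫_𝕜 := by
  simp [PiLp.inner_apply, Fin.sum_univ_succ]

theorem norm_consOne_sq (x : EuclideanSpace 𝕜 (Fin n)) :
    ‖consOne x‖ ^ 2 = 1 + ‖x‖ ^ 2 := by
  have := inner_consOne x x
  rw [inner_self_eq_norm_sq_to_K, inner_self_eq_norm_sq_to_K] at this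
  exact_mod_cast this

end EuclideanSpace

open EuclideanSpace

/-- an obtuse random variable `X` (taking value `vᵢ` with
probability `pᵢ = 1/(1+‖vᵢ‖²)`, the `vᵢ` forming an obtuse system) is centered
and normalized: `E[X^k] = 0` and `E[conj(X^k) X^l] = δ_{kl}`. -/
theorem stmt13 {N : ℕ} (v : Fin (N + 1) → EuclideanSpace ℂ (Fin N))
    (hv : ∀ i j, i ≠ j → (inner ℂ (v i) (v j) : ℂ) = -1) :
    (∀ k : Fin N, ∑ i, ((1 / (1 + ‖v i‖ ^ 2) : ℝ) : ℂ) * v i k = 0) ∧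
    (∀ k l : Fin N,
      ∑ i, ((1 / (1 + ‖v i‖ ^ 2) : ℝ) : ℂ) * (starRingEnd ℂ) (v i k) * v i l =
        if k = l then 1 else 0) := by
  have horth : Pairwise fun i j => ⟪consOne (v i), consOne (v j)⟫_ℂ = 0 := fun i j hij => by
    simp only [inner_consOne, hv i j hij, add_neg_cancel]
  have key := sum_inv_norm_sq_mul_conj_mul_eq_ite (fun i => consOne_ne_zero (v i)) horth rfl
  simp only [norm_consOne_sq, ← one_div, RCLike.ofReal_eq_complex_ofReal] at key
  refine ⟨fun k => ?_, fun k l => ?_⟩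
  · simpa only [consOne_zero, consOne_succ, map_one, mul_one, Fin.succ_ne_zero, if_false]
      using key k.succ 0
  · simpa only [consOne_succ, Fin.succ_inj, eq_comm] using key l.succ k.succ
end

section
/- Let X be an obtuse random variable in ℂ^N with values vᵢ and probabilities pᵢ, and extend with X⁰ ≡ 1. Define S^{ij}_k = E[X^i X^j conj(X^k)] for i,j,k = 0,…,N. Then X^i X^j = Σ_{k=0}^N S^{ij}_k X^k holds pointwise (i.e. for every ω ∈ Ω). -/
/-!
The functions `X⁰, …, Xᴺ` form an orthonormal basis of `L²(Ω, P)`, and the expansion is the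
completeness relation for this basis. Concretely, the kernel `∑ₖ Xᵏ(ω) conj (Xᵏ(ω'))` equals
`1 + ⟪v_ω', v_ω⟫`, which by obtuseness vanishes for `ω' ≠ ω` and equals `1 / p_ω` for
`ω' = ω`; hence `∑ₖ E[Y conj Xᵏ] Xᵏ(ω) = ∑_ω' p_ω' Y(ω') (1 + ⟪v_ω', v_ω⟫) = Y(ω)` for every
`Y : Ω → ℂ`, in particular for `Y = Xⁱ Xʲ`.
-/

open Finset ComplexConjugate

section ObtuseSystem

variable {Ω : Type*} {N : ℕ} (v : Ω → EuclideanSpace ℂ (Fin N)) (X : Fin (N + 1) → Ω → ℂ)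

lemma sum_mul_conj_eq_one_add_inner (hX0 : ∀ ω, X 0 ω = 1)
    (hXs : ∀ (j : Fin N) (ω), X j.succ ω = v ω j) (ω ω' : Ω) :
    ∑ k, X k ω * conj (X k ω') = 1 + inner ℂ (v ω') (v ω) := by
  rw [Fin.sum_univ_succ, hX0, hX0, PiLp.inner_apply]
  simp only [hXs, RCLike.inner_apply, map_one, one_mul]

lemma one_add_inner_self_eq_ofReal (ω : Ω) :
    1 + inner ℂ (v ω) (v ω) = ((1 + ‖v ω‖ ^ 2 : ℝ) : ℂ) := by
  rw [inner_self_eq_norm_sq_to_K]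
  push_cast
  rfl

theorem eq_sum_expectation_mul_conj_mul [Fintype Ω]
    (hv : Pairwise fun ω ω' => inner ℂ (v ω) (v ω') = (-1 : ℂ)) (hX0 : ∀ ω, X 0 ω = 1)
    (hXs : ∀ (j : Fin N) (ω), X j.succ ω = v ω j) (Y : Ω → ℂ) (ω : Ω) :
    Y ω = ∑ k, (∑ ω', ((1 / (1 + ‖v ω'‖ ^ 2) : ℝ) : ℂ) * (Y ω' * conj (X k ω'))) * X k ω := by
  have hswap : ∑ k, (∑ ω', ((1 / (1 + ‖v ω'‖ ^ 2) : ℝ) : ℂ) * (Y ω' * conj (X k ω'))) * X k ω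
      = ∑ ω', ((1 / (1 + ‖v ω'‖ ^ 2) : ℝ) : ℂ) * Y ω' * ∑ k, X k ω * conj (X k ω') := by
    simp_rw [sum_mul, mul_sum]
    rw [sum_comm]
    exact sum_congr rfl fun _ _ => sum_congr rfl fun _ _ => by ring
  rw [hswap, sum_eq_single ω]
  · rw [sum_mul_conj_eq_one_add_inner v X hX0 hXs, one_add_inner_self_eq_ofReal]
    have hpos : ((1 + ‖v ω‖ ^ 2 : ℝ) : ℂ) ≠ 0 := by exact_mod_cast (by positivity : (0 : ℝ) < _).ne'
    push_cast at hpos ⊢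
    field_simp
  · intro ω' _ hne
    rw [sum_mul_conj_eq_one_add_inner v X hX0 hXs, hv hne, add_neg_cancel, mul_zero]
  · exact fun h => absurd (mem_univ ω) h

end ObtuseSystem

/-- for an obtuse random variable `X` in `ℂ^N` (on the canonical
space `Ω = Fin (N+1)` with `P({ω}) = p_ω = 1/(1+‖v_ω‖²)`, `X^0 ≡ 1` and
`X^{j+1}(ω) = v_ω^j`), and `S^{ij}_k = E[X^i X^j conj(X^k)]`, the relation
`X^i X^j = ∑_k S^{ij}_k X^k` holds pointwise. -/
theorem stmt14 {N : ℕ} (v : Fin (N + 1) → EuclideanSpace ℂ (Fin N))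
    (hv : ∀ i j, i ≠ j → (inner ℂ (v i) (v j) : ℂ) = -1)
    (X : Fin (N + 1) → Fin (N + 1) → ℂ)
    (hX0 : ∀ ω, X 0 ω = 1)
    (hXs : ∀ (j : Fin N) (ω), X j.succ ω = v ω j) :
    ∀ (i j : Fin (N + 1)) (ω : Fin (N + 1)),
      X i ω * X j ω =
        ∑ k, (∑ ω', ((1 / (1 + ‖v ω'‖ ^ 2) : ℝ) : ℂ) *
            (X i ω' * X j ω' * (starRingEnd ℂ) (X k ω'))) * X k ω := by
  intro i j ω
  exact eq_sum_expectation_mul_conj_mul v X hv hX0 hXs (fun ω => X i ω * X j ω) ω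
end

section
/- Let X be an obtuse random variable in ℂ^N with 3-tensor S^{ij}_k = E[X^i X^j conj(X^k)] (indices 0,…,N, with X⁰ ≡ 1). Then conj(X^i) X^j = Σ_{k=0}^N conj(S^{ik}_j) X^k pointwise. -/
/-!
Adjoining the coordinate `X⁰ = 1` turns the obtuse system `v₁, …, v_{N+1}` into vectors
`(1, v_ω)` of `ℂ^{N+1}` with `⟪(1, v_a), (1, v_b)⟫ = 1 + ⟪v_a, v_b⟫`, which vanishes for
`a ≠ b` and equals `1 / p_a` for `a = b`. This dual orthogonality says that
`X⁰, …, X^N` is an orthonormal basis of `L²(Ω, p)`, so every function `f` on `Ω` equals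
`∑_k E[f conj(X^k)] X^k`; the theorem is this expansion for `f = conj(X^i) X^j`.
-/

open Finset ComplexConjugate

theorem eq_sum_expectation_mul_conj {Ω K : Type*} [Fintype Ω] [DecidableEq Ω] [Fintype K]
    (p : Ω → ℂ) (X : K → Ω → ℂ)
    (hX : ∀ a b, p a * ∑ k, conj (X k a) * X k b = if a = b then 1 else 0)
    (f : Ω → ℂ) (b : Ω) :
    f b = ∑ k, (∑ a, p a * f a * conj (X k a)) * X k b := by
  calc f b = ∑ a, f a * (p a * ∑ k, conj (X k a) * X k b) := by simp [hX]
    _ = ∑ k, (∑ a, p a * f a * conj (X k a)) * X k b := by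
      simp only [mul_sum, sum_mul]
      rw [sum_comm]
      exact sum_congr rfl fun _ _ ↦ sum_congr rfl fun _ _ ↦ by ring

theorem sum_conj_mul_eq_one_add_inner {Ω : Type*} {N : ℕ} (v : Ω → EuclideanSpace ℂ (Fin N))
    (X : Fin (N + 1) → Ω → ℂ) (hX0 : ∀ ω, X 0 ω = 1)
    (hXs : ∀ (j : Fin N) (ω), X j.succ ω = v ω j) (a b : Ω) :
    ∑ k, conj (X k a) * X k b = 1 + inner ℂ (v a) (v b) := by
  simp [Fin.sum_univ_succ, hX0, hXs, PiLp.inner_apply, mul_comm]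

theorem obtuse_weight_mul_sum_conj_mul {Ω : Type*} [DecidableEq Ω] {N : ℕ}
    (v : Ω → EuclideanSpace ℂ (Fin N))
    (hv : ∀ i j, i ≠ j → (inner ℂ (v i) (v j) : ℂ) = -1)
    (X : Fin (N + 1) → Ω → ℂ) (hX0 : ∀ ω, X 0 ω = 1)
    (hXs : ∀ (j : Fin N) (ω), X j.succ ω = v ω j) (a b : Ω) :
    ((1 / (1 + ‖v a‖ ^ 2) : ℝ) : ℂ) * ∑ k, conj (X k a) * X k b =
      if a = b then 1 else 0 := by
  rw [sum_conj_mul_eq_one_add_inner v X hX0 hXs]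
  split_ifs with hab
  · subst hab
    have hne : (1 + ‖v a‖ ^ 2 : ℂ) ≠ 0 := by
      exact_mod_cast (by positivity : (1 + ‖v a‖ ^ 2 : ℝ) ≠ 0)
    rw [inner_self_eq_norm_sq_to_K]
    push_cast
    exact one_div_mul_cancel hne
  · simp [hv a b hab]

/-- with the notations of the obtuse random variable `X` and its
3-tensor `S^{ij}_k = E[X^i X^j conj(X^k)]`, the relation
`conj(X^i) X^j = ∑_k conj(S^{ik}_j) X^k` holds pointwise. -/
theorem stmt15 {N : ℕ} (v : Fin (N + 1) → EuclideanSpace ℂ (Fin N))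
    (hv : ∀ i j, i ≠ j → (inner ℂ (v i) (v j) : ℂ) = -1)
    (X : Fin (N + 1) → Fin (N + 1) → ℂ)
    (hX0 : ∀ ω, X 0 ω = 1)
    (hXs : ∀ (j : Fin N) (ω), X j.succ ω = v ω j) :
    ∀ (i j : Fin (N + 1)) (ω : Fin (N + 1)),
      (starRingEnd ℂ) (X i ω) * X j ω =
        ∑ k, (starRingEnd ℂ) (∑ ω', ((1 / (1 + ‖v ω'‖ ^ 2) : ℝ) : ℂ) *
            (X i ω' * X k ω' * (starRingEnd ℂ) (X j ω'))) * X k ω := by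
  intro i j ω
  rw [eq_sum_expectation_mul_conj _ X (obtuse_weight_mul_sum_conj_mul v hv X hX0 hXs)
    (fun ω ↦ conj (X i ω) * X j ω) ω]
  refine sum_congr rfl fun k _ ↦ ?_
  simp only [map_sum, map_mul, Complex.conj_conj, Complex.conj_ofReal]
  exact congrArg (· * X k ω) (sum_congr rfl fun _ _ ↦ by ring)
end

section
/- The tensor S^{ij}_k = E[X^i X^j conj(X^k)] of an obtuse random variable X in ℂ^N is doubly symmetric: (a) S^{ij}_k is symmetric in (i,j); (b) Σ_m S^{im}_j S^{kl}_m is symmetric in (i,k); (c) Σ_m S^{im}_j conj(S^{lm}_k) is symmetric in (i,k). -/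
/-!
Obtuseness of `v` says exactly that `∑ m, X^m(ω) conj(X^m(τ)) = 1 + ⟪v τ, v ω⟫` equals
`δ_{ωτ} / p_ω`. Contracting over `m` therefore collapses a product of two expectations into one:
`∑ m, S^{im}_j S^{kl}_m = E[X^i conj(X^j) X^k X^l]` and
`∑ m, S^{im}_j conj(S^{lm}_k) = E[X^i conj(X^j) conj(X^l) X^k]`, both visibly symmetric in `i, k`.
-/

open Finset ComplexConjugate

section Completeness

variable {ι Ω : Type*} [Fintype ι] [Fintype Ω] [DecidableEq Ω] {p : Ω → ℝ} {X : ι → Ω → ℂ}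

theorem sum_expect_mul_expect_conj_of_completeness
    (hX : ∀ ω τ, (p ω : ℂ) * ∑ m, X m ω * conj (X m τ) = if ω = τ then 1 else 0)
    (f g : Ω → ℂ) :
    ∑ m, (∑ ω, (p ω : ℂ) * f ω * X m ω) * (∑ τ, (p τ : ℂ) * g τ * conj (X m τ)) =
      ∑ ω, (p ω : ℂ) * f ω * g ω := by
  calc ∑ m, (∑ ω, (p ω : ℂ) * f ω * X m ω) * (∑ τ, (p τ : ℂ) * g τ * conj (X m τ))
      = ∑ ω, ∑ τ, f ω * (p τ * g τ) * ((p ω : ℂ) * ∑ m, X m ω * conj (X m τ)) := by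
        simp only [sum_mul_sum]
        simp only [mul_sum]
        rw [sum_comm]
        refine sum_congr rfl fun ω _ => ?_
        rw [sum_comm]
        exact sum_congr rfl fun τ _ => sum_congr rfl fun m _ => by ring
    _ = ∑ ω, (p ω : ℂ) * f ω * g ω := by
        simp only [hX, mul_ite, mul_one, mul_zero, sum_ite_eq, mem_univ, if_true]
        exact sum_congr rfl fun ω _ => by ring

variable {S : ι → ι → ι → ℂ}
  (hS : ∀ i j k, S i j k = ∑ ω, (p ω : ℂ) * (X i ω * X j ω * conj (X k ω)))
include hS

theorem sum_moment_mul_moment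
    (hX : ∀ ω τ, (p ω : ℂ) * ∑ m, X m ω * conj (X m τ) = if ω = τ then 1 else 0)
    (i j k l : ι) :
    ∑ m, S i m j * S k l m = ∑ ω, (p ω : ℂ) * (X i ω * conj (X j ω)) * (X k ω * X l ω) := by
  rw [← sum_expect_mul_expect_conj_of_completeness hX]
  simp only [hS]
  exact sum_congr rfl fun m _ => by
    congr 1 <;> exact sum_congr rfl fun ω _ => by ring

theorem sum_moment_mul_conj_moment
    (hX : ∀ ω τ, (p ω : ℂ) * ∑ m, X m ω * conj (X m τ) = if ω = τ then 1 else 0)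
    (i j k l : ι) :
    ∑ m, S i m j * conj (S l m k) =
      ∑ ω, (p ω : ℂ) * (X i ω * conj (X j ω)) * (conj (X l ω) * X k ω) := by
  rw [← sum_expect_mul_expect_conj_of_completeness hX]
  simp only [hS, map_sum, map_mul, Complex.conj_ofReal, Complex.conj_conj]
  exact sum_congr rfl fun m _ => by
    congr 1 <;> exact sum_congr rfl fun ω _ => by ring

end Completeness

theorem sum_obtuse_coord_mul_conj {N : ℕ} (v : Fin (N + 1) → EuclideanSpace ℂ (Fin N))
    (X : Fin (N + 1) → Fin (N + 1) → ℂ) (hX0 : ∀ ω, X 0 ω = 1)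
    (hXs : ∀ (j : Fin N) (ω), X j.succ ω = v ω j) (ω τ : Fin (N + 1)) :
    ∑ m, X m ω * conj (X m τ) = 1 + inner ℂ (v τ) (v ω) := by
  simp [Fin.sum_univ_succ, hX0, hXs, PiLp.inner_apply]

theorem obtuse_completeness {N : ℕ} (v : Fin (N + 1) → EuclideanSpace ℂ (Fin N))
    (hv : ∀ i j, i ≠ j → (inner ℂ (v i) (v j) : ℂ) = -1)
    (X : Fin (N + 1) → Fin (N + 1) → ℂ) (hX0 : ∀ ω, X 0 ω = 1)
    (hXs : ∀ (j : Fin N) (ω), X j.succ ω = v ω j) (ω τ : Fin (N + 1)) :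
    ((1 / (1 + ‖v ω‖ ^ 2) : ℝ) : ℂ) * ∑ m, X m ω * conj (X m τ) = if ω = τ then 1 else 0 := by
  rw [sum_obtuse_coord_mul_conj v X hX0 hXs]
  split_ifs with h
  · subst h
    rw [inner_self_eq_norm_sq_to_K]
    have : (1 + ‖v ω‖ ^ 2 : ℝ) ≠ 0 := by positivity
    push_cast
    exact one_div_mul_cancel (by exact_mod_cast this)
  · rw [hv τ ω (Ne.symm h), add_neg_cancel, mul_zero]

/-- the 3-tensor `S^{ij}_k = E[X^i X^j conj(X^k)]` of an obtuse
random variable is doubly symmetric: (a) symmetric in `(i,j)`;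
(b) `∑_m S^{im}_j S^{kl}_m` is symmetric in `(i,k)`;
(c) `∑_m S^{im}_j conj(S^{lm}_k)` is symmetric in `(i,k)`. -/
theorem stmt17 {N : ℕ} (v : Fin (N + 1) → EuclideanSpace ℂ (Fin N))
    (hv : ∀ i j, i ≠ j → (inner ℂ (v i) (v j) : ℂ) = -1)
    (X : Fin (N + 1) → Fin (N + 1) → ℂ)
    (hX0 : ∀ ω, X 0 ω = 1)
    (hXs : ∀ (j : Fin N) (ω), X j.succ ω = v ω j)
    (S : Fin (N + 1) → Fin (N + 1) → Fin (N + 1) → ℂ)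
    (hS : ∀ i j k, S i j k =
      ∑ ω, ((1 / (1 + ‖v ω‖ ^ 2) : ℝ) : ℂ) *
        (X i ω * X j ω * (starRingEnd ℂ) (X k ω))) :
    (∀ i j k, S i j k = S j i k) ∧
    (∀ i j k l, ∑ m, S i m j * S k l m = ∑ m, S k m j * S i l m) ∧
    (∀ i j k l, ∑ m, S i m j * (starRingEnd ℂ) (S l m k) =
        ∑ m, S k m j * (starRingEnd ℂ) (S l m i)) := by
  have hX := obtuse_completeness v hv X hX0 hXs
  refine ⟨fun i j k => ?_, fun i j k l => ?_, fun i j k l => ?_⟩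
  · rw [hS, hS]
    exact sum_congr rfl fun ω _ => by ring
  · rw [sum_moment_mul_moment hS hX, sum_moment_mul_moment hS hX]
    exact sum_congr rfl fun ω _ => by ring
  · rw [sum_moment_mul_conj_moment hS hX, sum_moment_mul_conj_moment hS hX]
    exact sum_congr rfl fun ω _ => by ring
end

section
/- Let X be an obtuse random variable in ℂ^N with tensor S and canonical isometric isomorphism W_X: L²(Ω) → ℂ^{N+1} sending X^i to eᵢ. Then W_X M_{X^i} W_X* = Σ_{j,k=0}^N S^{ij}_k a^j_k, where M_{X^i} is the multiplication operator by X^i on L²(Ω) and a^j_k e_l = δ_{j,l} e_k. -/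
/-! `W_X M_{X^i} W_X*` has `(k, j)` entry `∑_ω p_ω conj(X^k ω) X^i ω X^j ω = S^{ij}_k`, which is
exactly the coefficient of `a^j_k` on the right-hand side. -/

theorem Matrix.sum_sum_smul_single_one {m n α : Type*} [Fintype m] [Fintype n]
    [DecidableEq m] [DecidableEq n] [Semiring α] (c : n → m → α) :
    ∑ j, ∑ k, c j k • Matrix.single k j (1 : α) = Matrix.of fun k j => c j k := by
  rw [Finset.sum_comm]
  simp_rw [Matrix.smul_single, smul_eq_mul, mul_one]
  exact Matrix.sum_sum_single _

theorem stmt18_general {N : ℕ} (v : Fin (N + 1) → EuclideanSpace ℂ (Fin N))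
    (X : Fin (N + 1) → Fin (N + 1) → ℂ)
    (S : Fin (N + 1) → Fin (N + 1) → Fin (N + 1) → ℂ)
    (hS : ∀ i j k, S i j k =
      ∑ ω, ((1 / (1 + ‖v ω‖ ^ 2) : ℝ) : ℂ) *
        (X i ω * X j ω * (starRingEnd ℂ) (X k ω))) :
    ∀ i : Fin (N + 1),
      (Matrix.of fun k ω => ((1 / (1 + ‖v ω‖ ^ 2) : ℝ) : ℂ) *
          (starRingEnd ℂ) (X k ω)) *
        (Matrix.diagonal fun ω => X i ω) *
        (Matrix.of fun ω k => X k ω) =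
      ∑ j, ∑ k, S i j k • Matrix.single k j (1 : ℂ) := by
  intro i
  rw [Matrix.sum_sum_smul_single_one]
  ext k j
  rw [Matrix.mul_apply]
  simp only [Matrix.mul_diagonal, Matrix.of_apply, hS]
  exact Finset.sum_congr rfl fun ω _ => by ring

/-- multiplication operator representation. On the canonical
space `Ω = Fin (N+1)` with `P({ω}) = p_ω = 1/(1+‖v_ω‖²)`, the canonical
isomorphism `W_X : L²(Ω) → ℂ^{N+1}`, `X^k ↦ e_k`, has matrix
`W_{kω} = p_ω conj(X^k(ω))`, its adjoint has matrix `(W*)_{ωk} = X^k(ω)`, and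
the multiplication operator `M_{X^i}` is the diagonal matrix `diag(X^i(ω))`.
The claim `W_X M_{X^i} W_X* = ∑_{j,k} S^{ij}_k a^j_k` becomes the matrix
identity below, where `a^j_k = stdBasisMatrix k j 1` (i.e. `a^j_k e_l = δ_{jl} e_k`). -/
theorem stmt18 {N : ℕ} (v : Fin (N + 1) → EuclideanSpace ℂ (Fin N))
    (hv : ∀ i j, i ≠ j → (inner ℂ (v i) (v j) : ℂ) = -1)
    (X : Fin (N + 1) → Fin (N + 1) → ℂ)
    (hX0 : ∀ ω, X 0 ω = 1)
    (hXs : ∀ (j : Fin N) (ω), X j.succ ω = v ω j)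
    (S : Fin (N + 1) → Fin (N + 1) → Fin (N + 1) → ℂ)
    (hS : ∀ i j k, S i j k =
      ∑ ω, ((1 / (1 + ‖v ω‖ ^ 2) : ℝ) : ℂ) *
        (X i ω * X j ω * (starRingEnd ℂ) (X k ω))) :
    ∀ i : Fin (N + 1),
      (Matrix.of fun k ω => ((1 / (1 + ‖v ω‖ ^ 2) : ℝ) : ℂ) *
          (starRingEnd ℂ) (X k ω)) *
        (Matrix.diagonal fun ω => X i ω) *
        (Matrix.of fun ω k => X k ω) =
      ∑ j, ∑ k, S i j k • Matrix.single k j (1 : ℂ) :=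
  stmt18_general v X S hS
end
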